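/- For d ≥ 2, the mean number of internal vertices of the typical maximal segment, given by Σ_{n≥0} n · p₁,₀(n) with p₁,₀(n) = d(d−2)! ∫₀¹∫₀^{s_{d−1}}…∫₀^{s₂} s_{d−1}² (d − 2s_{d−1} − … − s₁)^n / (d − s_{d−1} − … − s₁)^{n+1} ds₁…ds_{d−1}, equals (d² − d + 2) / (2(d−1)). -/

import Mathlib

/-!
Write `A = d - ∑ sᵢ` and `M = s_{d-1}`. The integrand is `M · (M / A) (1 - M / A)ⁿ`, a multiple
of a geometric law, so its first moment in `n` is `M · (A - M) / M = A - M`. Everything is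
nonnegative, so sum and integral commute, and the mean is `d (d-2)! ∫ (d - ∑ sᵢ - s_{d-1})` over
the ordered simplex. Slicing that simplex along its largest coordinate gives its volume
`xᵐ / m!` and the moments `∫ ∑ sᵢ = m x^(m+1) / (2 m!)` and `∫ s_max = x^(m+2) / ((m+2) m!)`.
-/

open MeasureTheory Set
open scoped Nat

def orderedSimplex (m : ℕ) (x : ℝ) : Set (Fin m → ℝ) :=
  {s | StrictMono s ∧ ∀ i, s i ∈ Ioo 0 x}

theorem hasSum_integral_of_nonneg {α : Type*} [MeasurableSpace α] {μ : Measure α}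
    {F : ℕ → α → ℝ} {G : α → ℝ} (hF_meas : ∀ n, AEStronglyMeasurable (F n) μ)
    (hF_nonneg : ∀ n, 0 ≤ᵐ[μ] F n) (h_lim : ∀ᵐ a ∂μ, HasSum (F · a) (G a))
    (hG : Integrable G μ) : HasSum (fun n => ∫ a, F n a ∂μ) (∫ a, G a ∂μ) := by
  refine hasSum_integral_of_dominated_convergence F hF_meas (fun n => ?_)
    (h_lim.mono fun a ha => ha.summable) (hG.congr (h_lim.mono fun a ha => ha.tsum_eq.symm)) h_lim
  filter_upwards [hF_nonneg n] with a ha using (Real.norm_of_nonneg ha).le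

theorem hasSum_nat_mul_sq_mul_pow_div_pow {M A : ℝ} (hM : 0 < M) (hMA : M < A) :
    HasSum (fun n : ℕ => n * (M ^ 2 * (A - M) ^ n / A ^ (n + 1))) (A - M) := by
  have hA : 0 < A := hM.trans hMA
  have hq : ‖(A - M) / A‖ < 1 := by
    rw [Real.norm_of_nonneg (div_nonneg (sub_pos.2 hMA).le hA.le), div_lt_one hA]
    linarith
  have hterm (n : ℕ) :
      n * (M ^ 2 * (A - M) ^ n / A ^ (n + 1)) = M ^ 2 / A * (n * ((A - M) / A) ^ n) := by
    rw [div_pow]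
    field_simp
    ring
  have hsum : M ^ 2 / A * ((A - M) / A / (1 - (A - M) / A) ^ 2) = A - M := by
    rw [one_sub_div hA.ne', sub_sub_cancel]
    field_simp
  have h := (hasSum_coe_mul_geometric_of_norm_lt_one hq).mul_left (M ^ 2 / A)
  rwa [hsum, ← funext hterm] at h

theorem setIntegral_Ioo_pow {x : ℝ} (hx : 0 ≤ x) (n : ℕ) :
    ∫ y in Ioo 0 x, y ^ n = x ^ (n + 1) / (n + 1) := by
  rw [← integral_Ioc_eq_integral_Ioo, ← intervalIntegral.integral_of_le hx, integral_pow]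
  simp

namespace orderedSimplex

variable {m : ℕ} {x : ℝ}

theorem measurableSet : MeasurableSet (orderedSimplex m x) := by
  simp only [orderedSimplex, StrictMono, mem_Ioo]
  measurability

theorem integrableOn {f : (Fin m → ℝ) → ℝ} (hf : Continuous f) :
    IntegrableOn f (orderedSimplex m x) :=
  (hf.continuousOn.integrableOn_compact (isCompact_univ_pi fun _ => isCompact_Icc)).mono_set
    fun _ hs i _ => Ioo_subset_Icc_self (hs.2 i)

theorem snoc_mem_iff {y : ℝ} {s : Fin m → ℝ} :
    (Fin.snoc s y : Fin (m + 1) → ℝ) ∈ orderedSimplex (m + 1) x ↔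
      y ∈ Ioo 0 x ∧ s ∈ orderedSimplex m y := by
  simp only [orderedSimplex, mem_ofPred_eq, StrictMono, Fin.forall_fin_succ', Fin.snoc_castSucc,
    Fin.snoc_last, Fin.castSucc_lt_castSucc_iff, Fin.castSucc_lt_last, lt_self_iff_false,
    (Fin.castSucc_lt_last _).not_gt, mem_Ioo, imp_false, forall_const, false_imp_iff,
    implies_true, not_false_eq_true, and_true]
  grind

theorem setIntegral_succ {f : (Fin (m + 1) → ℝ) → ℝ}
    (hf : IntegrableOn f (orderedSimplex (m + 1) x)) :
    ∫ s in orderedSimplex (m + 1) x, f s =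
      ∫ y in Ioo 0 x, ∫ s in orderedSimplex m y, f (Fin.snoc s y) := by
  let e := MeasurableEquiv.piFinSuccAbove (fun _ : Fin (m + 1) => ℝ) (Fin.last m)
  have he : MeasurePreserving e.symm := (volume_preserving_piFinSuccAbove _ (Fin.last m)).symm e
  have he_apply (p : ℝ × (Fin m → ℝ)) : e.symm p = Fin.snoc p.2 p.1 := by
    simp [e, MeasurableEquiv.piFinSuccAbove, Fin.insertNthEquiv, Fin.insertNth_last']
  have hpre : e.symm ⁻¹' orderedSimplex (m + 1) x =
      {p | p.1 ∈ Ioo 0 x ∧ p.2 ∈ orderedSimplex m p.1} := by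
    ext p; simp [he_apply, snoc_mem_iff]
  have hA_meas :
      MeasurableSet {p : ℝ × (Fin m → ℝ) | p.1 ∈ Ioo 0 x ∧ p.2 ∈ orderedSimplex m p.1} :=
    hpre ▸ measurableSet.preimage e.symm.measurable
  have hA_int := (he.integrableOn_comp_preimage e.symm.measurableEmbedding).2 hf
  rw [hpre, Measure.volume_eq_prod, ← integrable_indicator_iff hA_meas] at hA_int
  rw [← he.setIntegral_preimage_emb e.symm.measurableEmbedding, hpre,
    ← integral_indicator hA_meas, Measure.volume_eq_prod, integral_prod _ (by exact hA_int),
    ← integral_indicator measurableSet_Ioo]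
  congr 1 with y
  rw [indicator_apply]
  split_ifs with hy
  · rw [← integral_indicator measurableSet]
    congr 1 with s
    by_cases hs : s ∈ orderedSimplex m y
    · rw [indicator_of_mem (by exact ⟨hy, hs⟩), indicator_of_mem hs, he_apply]
    · rw [indicator_of_notMem (fun h => hs h.2), indicator_of_notMem hs]
  · exact integral_eq_zero_of_ae (.of_forall fun s => indicator_of_notMem (fun h => hy h.1) _)

theorem measureReal_eq (hx : 0 ≤ x) : volume.real (orderedSimplex m x) = x ^ m / m ! := by
  induction m generalizing x with
  | zero => simp [orderedSimplex, Subsingleton.strictMono, measureReal_def, volume_pi]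
  | succ m ih =>
    have hslice := setIntegral_succ (m := m) (x := x) (f := fun _ => 1) (integrableOn (by fun_prop))
    simp only [setIntegral_const, smul_eq_mul, mul_one] at hslice
    rw [hslice, setIntegral_congr_fun measurableSet_Ioo fun y hy => ih hy.1.le, integral_div,
      setIntegral_Ioo_pow hx, Nat.factorial_succ]
    push_cast
    field_simp

theorem setIntegral_sum (hx : 0 ≤ x) :
    ∫ s in orderedSimplex m x, ∑ i, s i = m * x ^ (m + 1) / (2 * m !) := by
  induction m generalizing x with
  | zero => simp
  | succ m ih =>
    have hinner : ∀ y ∈ Ioo 0 x,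
        ∫ s in orderedSimplex m y, ∑ i, (Fin.snoc s y : Fin (m + 1) → ℝ) i =
          (m + 2) / (2 * m !) * y ^ (m + 1) := by
      intro y hy
      simp only [Fin.sum_univ_castSucc, Fin.snoc_castSucc, Fin.snoc_last]
      rw [integral_add (integrableOn (by fun_prop)) (integrableOn continuous_const),
        ih hy.1.le, setIntegral_const, measureReal_eq hy.1.le, smul_eq_mul]
      field_simp
      ring
    rw [setIntegral_succ (integrableOn (by fun_prop)),
      setIntegral_congr_fun measurableSet_Ioo hinner, integral_const_mul,
      setIntegral_Ioo_pow hx, Nat.factorial_succ]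
    push_cast
    field_simp
    ring

theorem setIntegral_last (hx : 0 ≤ x) :
    ∫ s in orderedSimplex (m + 1) x, s (Fin.last m) = x ^ (m + 2) / ((m + 2) * m !) := by
  have hinner : ∀ y ∈ Ioo 0 x,
      ∫ s in orderedSimplex m y, (Fin.snoc s y : Fin (m + 1) → ℝ) (Fin.last m) =
        y ^ (m + 1) / m ! := by
    intro y hy
    simp only [Fin.snoc_last]
    rw [setIntegral_const, measureReal_eq hy.1.le, smul_eq_mul]
    ring
  rw [setIntegral_succ (integrableOn (continuous_apply _)),
    setIntegral_congr_fun measurableSet_Ioo hinner, integral_div, setIntegral_Ioo_pow hx]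
  push_cast
  field_simp
  ring

theorem setIntegral_sub_sum_sub_last (c : ℝ) :
    ∫ s in orderedSimplex (m + 1) 1, (c - ∑ i, s i - s (Fin.last m)) =
      c / (m + 1)! - (m + 1) / (2 * (m + 1)!) - 1 / ((m + 2) * m !) := by
  rw [integral_sub (integrableOn (by fun_prop)) (integrableOn (continuous_apply _)),
    integral_sub (integrableOn continuous_const) (integrableOn (by fun_prop)), setIntegral_const,
    measureReal_eq zero_le_one, setIntegral_sum zero_le_one, setIntegral_last zero_le_one]
  push_cast
  ring

theorem last_add_sum_lt {s : Fin (m + 1) → ℝ} (hs : s ∈ orderedSimplex (m + 1) x) :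
    s (Fin.last m) + ∑ i, s i < (m + 2) * x := by
  have hsum : ∑ i, s i < ∑ _i : Fin (m + 1), x :=
    Finset.sum_lt_sum_of_nonempty Finset.univ_nonempty fun i _ => (hs.2 i).2
  simp only [Finset.sum_const, Finset.card_univ, Fintype.card_fin, nsmul_eq_mul] at hsum
  push_cast at hsum
  linarith [(hs.2 (Fin.last m)).2]

theorem hasSum_nat_mul_setIntegral {c : ℝ} (hc : m + 2 ≤ c) :
    HasSum (fun n : ℕ => n * ∫ s in orderedSimplex (m + 1) 1,
        s (Fin.last m) ^ 2 * (c - ∑ i, s i - s (Fin.last m)) ^ n / (c - ∑ i, s i) ^ (n + 1))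
      (∫ s in orderedSimplex (m + 1) 1, (c - ∑ i, s i - s (Fin.last m))) := by
  have hbounds : ∀ s ∈ orderedSimplex (m + 1) 1,
      0 < s (Fin.last m) ∧ s (Fin.last m) < c - ∑ i, s i := fun s hs =>
    ⟨(hs.2 _).1, by linarith [last_add_sum_lt hs]⟩
  simp_rw [← integral_const_mul]
  refine hasSum_integral_of_nonneg (fun n => (by fun_prop : Measurable _).aestronglyMeasurable)
    (fun n => ae_restrict_of_forall_mem measurableSet fun s hs => ?_)
    (ae_restrict_of_forall_mem measurableSet fun s hs =>
      hasSum_nat_mul_sq_mul_pow_div_pow (hbounds s hs).1 (hbounds s hs).2)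
    (integrableOn (by fun_prop))
  obtain ⟨hM, hMA⟩ := hbounds s hs
  have hA : 0 < c - ∑ i, s i := hM.trans hMA
  have hAM : 0 < c - ∑ i, s i - s (Fin.last m) := sub_pos.2 hMA
  positivity

end orderedSimplex

/-- The mean number of internal vertices of the typical maximal segment of a
STIT tessellation in `ℝ^d` (`d ≥ 2`, time `t = 1`) equals `(d²−d+2)/(2(d−1))`. -/
theorem stmt_11 (d : ℕ) (hd : 2 ≤ d) :
    ∑' n : ℕ, (n : ℝ) *
      ((d : ℝ) * (Nat.factorial (d - 2)) *
        ∫ s in {s : Fin (d - 1) → ℝ | StrictMono s ∧ ∀ i, s i ∈ Set.Ioo 0 1},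
          ((s ⟨d - 2, by omega⟩) ^ 2 *
            ((d : ℝ) - ∑ i, s i - s ⟨d - 2, by omega⟩) ^ n
            / ((d : ℝ) - ∑ i, s i) ^ (n + 1)))
      = ((d : ℝ) ^ 2 - d + 2) / (2 * ((d : ℝ) - 1)) := by
  obtain ⟨k, rfl⟩ : ∃ k, d = k + 2 := ⟨d - 2, by omega⟩
  change ∑' n : ℕ, (n : ℝ) * (((k + 2 : ℕ) : ℝ) * k ! * ∫ s in orderedSimplex (k + 1) 1,
    s (Fin.last k) ^ 2 * (((k + 2 : ℕ) : ℝ) - ∑ i, s i - s (Fin.last k)) ^ n /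
      (((k + 2 : ℕ) : ℝ) - ∑ i, s i) ^ (n + 1)) = _
  have hmean := (orderedSimplex.hasSum_nat_mul_setIntegral (m := k) (c := ((k + 2 : ℕ) : ℝ))
    (by push_cast; rfl)).mul_left (((k + 2 : ℕ) : ℝ) * k !)
  rw [tsum_congr fun n => mul_left_comm _ _ _, hmean.tsum_eq,
    orderedSimplex.setIntegral_sub_sum_sub_last, Nat.factorial_succ]
  push_cast
  rw [show (k : ℝ) + 2 - 1 = k + 1 by ring]
  field_simp
  ring
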